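/- arXiv:1005.3932 — 2 statements merged into one kernel-verified Lean document; each statement's English description precedes it below -/
import Mathlib

section
/- Let q ≥ 1 and N ≥ 1 be integers, let p_1 < p_2 < … < p_N be the first N primes, and set φ_n = log p_n. Then for any two distinct N-tuples (h_1,…,h_N), (k_1,…,k_N) of nonnegative integers each summing to q, we have |Σ_{n=1}^N (h_n − k_n) φ_n| ≥ p_N^{−q}. -/
open Real Finset

/-!
Put `A = ∏ pₙ ^ hₙ` and `B = ∏ pₙ ^ kₙ`. The sum in question is `log A - log B`; by unique
factorization `A ≠ B`, and both are at most `p_N ^ q`. Two distinct positive integers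
`a < b ≤ M` satisfy `log b - log a ≥ 1 - a / b ≥ 1 / b ≥ 1 / M`.
-/

lemma Real.inv_le_log_sub_log_of_add_one_le {a b : ℝ} (ha : 0 < a) (hab : a + 1 ≤ b) :
    b⁻¹ ≤ log b - log a := by
  have hb : 0 < b := by linarith
  calc b⁻¹ ≤ 1 - (b / a)⁻¹ := by
        rw [inv_div, le_sub_iff_add_le, inv_eq_one_div, ← add_div, div_le_one hb]
        linarith
    _ ≤ log (b / a) := one_sub_inv_le_log_of_pos (div_pos hb ha)
    _ = log b - log a := log_div hb.ne' ha.ne'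

lemma Real.inv_le_abs_log_sub_log {a b M : ℕ} (ha : 0 < a) (hb : 0 < b) (hab : a ≠ b)
    (haM : a ≤ M) (hbM : b ≤ M) :
    (M : ℝ)⁻¹ ≤ |log a - log b| := by
  wlog hlt : a < b generalizing a b
  · rw [abs_sub_comm]
    exact this hb ha hab.symm hbM haM (hab.symm.lt_of_le (not_lt.1 hlt))
  have hba : (a : ℝ) + 1 ≤ b := by exact_mod_cast hlt
  have hgap := inv_le_log_sub_log_of_add_one_le (by positivity) hba
  calc (M : ℝ)⁻¹ ≤ (b : ℝ)⁻¹ := inv_anti₀ (by positivity) (by exact_mod_cast hbM)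
    _ ≤ log b - log a := hgap
    _ = |log a - log b| := by
      rw [abs_sub_comm, abs_of_nonneg (hgap.trans' (by positivity))]

section PrimePowerProducts

variable {ι : Type*} [Fintype ι] {p : ι → ℕ}

lemma Nat.factorization_prod_pow_apply (hp : ∀ i, (p i).Prime) (hinj : Function.Injective p)
    (e : ι → ℕ) (i : ι) : (∏ j, p j ^ e j).factorization (p i) = e i := by
  rw [Nat.factorization_prod fun j _ => pow_ne_zero _ (hp j).ne_zero, Finsupp.finsetSum_apply,
    Finset.sum_eq_single i]
  · simp [(hp i).factorization_pow]
  · intro j _ hji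
    rw [(hp j).factorization_pow, Finsupp.single_apply, if_neg (hinj.ne hji)]
  · simp

lemma Nat.prod_pow_injective (hp : ∀ i, (p i).Prime) (hinj : Function.Injective p) :
    Function.Injective fun e : ι → ℕ => ∏ j, p j ^ e j := fun e f hef => funext fun i => by
  rw [← Nat.factorization_prod_pow_apply hp hinj e i,
    ← Nat.factorization_prod_pow_apply hp hinj f i]
  exact congrArg (fun n => n.factorization (p i)) hef

lemma Nat.prod_pow_le_pow_sum {M : ℕ} (hpM : ∀ i, p i ≤ M) (e : ι → ℕ) :
    ∏ i, p i ^ e i ≤ M ^ ∑ i, e i := by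
  rw [← Finset.prod_pow_eq_pow_sum]
  exact Finset.prod_le_prod' fun i _ => Nat.pow_le_pow_left (hpM i) _

lemma Real.sum_mul_log_eq_log_prod_pow (hp : ∀ i, p i ≠ 0) (e : ι → ℕ) :
    ∑ i, (e i : ℝ) * log (p i) = log (∏ i, p i ^ e i : ℕ) := by
  push_cast
  rw [log_prod fun i _ => pow_ne_zero _ (by exact_mod_cast hp i)]
  simp only [log_pow]

theorem Real.inv_pow_le_abs_sum_sub_mul_log_prime (hp : ∀ i, (p i).Prime)
    (hinj : Function.Injective p) {M q : ℕ} (hpM : ∀ i, p i ≤ M) {e f : ι → ℕ}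
    (he : ∑ i, e i = q) (hf : ∑ i, f i = q) (hef : e ≠ f) :
    ((M : ℝ) ^ q)⁻¹ ≤ |∑ i, ((e i : ℝ) - f i) * log (p i)| := by
  have hp0 : ∀ i, p i ≠ 0 := fun i => (hp i).ne_zero
  have hpos : ∀ e : ι → ℕ, 0 < ∏ i, p i ^ e i := fun e =>
    Finset.prod_pos fun i _ => pow_pos (hp i).pos _
  simp only [sub_mul, Finset.sum_sub_distrib, sum_mul_log_eq_log_prod_pow hp0]
  have := inv_le_abs_log_sub_log (hpos e) (hpos f) ((Nat.prod_pow_injective hp hinj).ne hef)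
    (he ▸ Nat.prod_pow_le_pow_sum hpM e) (hf ▸ Nat.prod_pow_le_pow_sum hpM f)
  exact_mod_cast this

end PrimePowerProducts

theorem stmt0_general (q N : ℕ)
    (h k : Fin N → ℕ)
    (hh : ∑ n, h n = q) (hk : ∑ n, k n = q) (hne : h ≠ k) :
    ((Nat.nth Nat.Prime (N - 1) : ℝ)) ^ (-(q : ℤ)) ≤
      |∑ n : Fin N, ((h n : ℝ) - (k n : ℝ)) * Real.log (Nat.nth Nat.Prime n)| := by
  have hmono : ∀ n : Fin N, Nat.nth Nat.Prime n ≤ Nat.nth Nat.Prime (N - 1) := fun n =>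
    Nat.nth_monotone Nat.infinite_setOfPred_prime (by omega)
  rw [zpow_neg, zpow_natCast]
  exact inv_pow_le_abs_sum_sub_mul_log_prime (p := fun n : Fin N => Nat.nth Nat.Prime n)
    (fun n => Nat.prime_nth_prime n)
    ((Nat.nth_injective Nat.infinite_setOfPred_prime).comp Fin.val_injective) hmono hh hk hne

theorem stmt0 (q N : ℕ) (hq : 1 ≤ q) (hN : 1 ≤ N)
    (h k : Fin N → ℕ)
    (hh : ∑ n, h n = q) (hk : ∑ n, k n = q) (hne : h ≠ k) :
    ((Nat.nth Nat.Prime (N - 1) : ℝ)) ^ (-(q : ℤ)) ≤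
      |∑ n : Fin N, ((h n : ℝ) - (k n : ℝ)) * Real.log (Nat.nth Nat.Prime n)| :=
  stmt0_general q N h k hh hk hne
end

section
/- Let λ_1, …, λ_N be distinct real numbers with |λ_m − λ_n| ≥ δ for all m ≠ n, where δ > 0. Then for any complex numbers x_1, …, x_N and y_1, …, y_N, |Σ_{m≠n} x_m y_n / (λ_m − λ_n)| ≤ (π/δ) (Σ_m |x_m|^2)^{1/2} (Σ_n |y_n|^2)^{1/2}. -/
/-!
Montgomery–Vaughan. The sum is the bilinear form `x ⬝ᵥ A *ᵥ y` of the matrix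
`A m n = (λ m - λ n)⁻¹` (with `A m m = 0`), and `A` is skew-Hermitian, so its operator norm is the
largest `|μ|` over eigenvalues `i μ`. For an eigenvector `c`, partial fractions give
`AᵀA = diag(∑ᵣ A r s ^ 2) + [diag(∑ᵣ A r s), A] + 2 A ⊙ A`; the commutator contributes nothing to
`c* AᵀA c` because `c` is an eigenvector on both sides, and Schur's test bounds the other two terms,
so `μ ^ 2 ≤ 3 D` with `D = max_s ∑_{r ≠ s} (λ r - λ s)⁻²`. Separation gives `D ≤ 2 ζ(2) / δ ^ 2`,
hence `|μ| ≤ π / δ`.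
-/

open Finset Real Matrix

theorem Nat.floor_div_lt_floor_div {a b δ : ℝ} (hδ : 0 < δ) (ha : 0 ≤ a) (hab : a + δ ≤ b) :
    ⌊a / δ⌋₊ < ⌊b / δ⌋₊ := by
  rw [Nat.lt_iff_add_one_le, Nat.le_floor_iff (div_nonneg (by linarith) hδ.le),
    Nat.cast_add_one, le_div_iff₀ hδ]
  nlinarith [Nat.floor_le (div_nonneg ha hδ.le), div_mul_cancel₀ a hδ.ne']

theorem sum_inv_sq_le_of_separated {ι : Type*} (s : Finset ι) (f : ι → ℝ) {δ : ℝ} (hδ : 0 < δ)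
    (hlow : ∀ i ∈ s, δ ≤ f i) (hsep : ∀ i ∈ s, ∀ j ∈ s, i ≠ j → δ ≤ |f i - f j|) :
    ∑ i ∈ s, (f i ^ 2)⁻¹ ≤ π ^ 2 / 6 / δ ^ 2 := by
  -- `⌊f i / δ⌋₊` is a positive integer below `f i / δ`, injective by the separation
  set k : ι → ℕ := fun i => ⌊f i / δ⌋₊
  have hk_inj : Set.InjOn k s := by
    intro i hi j hj hij
    by_contra hne
    have hfi := hδ.le.trans (hlow i hi)
    have hfj := hδ.le.trans (hlow j hj)
    rcases le_abs'.mp (hsep i hi j hj hne) with h | h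
    · exact (Nat.floor_div_lt_floor_div hδ hfi (by linarith)).ne hij
    · exact (Nat.floor_div_lt_floor_div hδ hfj (by linarith)).ne' hij
  have hterm : ∀ i ∈ s, (f i ^ 2)⁻¹ ≤ (δ ^ 2)⁻¹ * (1 / (k i : ℝ) ^ 2) := by
    intro i hi
    have hk_pos : (1 : ℝ) ≤ k i :=
      mod_cast Nat.le_floor (by rw [Nat.cast_one, one_le_div hδ]; exact hlow i hi)
    have hk_le : (k i : ℝ) * δ ≤ f i :=
      (le_div_iff₀ hδ).mp (Nat.floor_le (div_nonneg (hδ.le.trans (hlow i hi)) hδ.le))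
    calc (f i ^ 2)⁻¹ ≤ (((k i : ℝ) * δ) ^ 2)⁻¹ := by gcongr
      _ = (δ ^ 2)⁻¹ * (1 / (k i : ℝ) ^ 2) := by ring
  calc ∑ i ∈ s, (f i ^ 2)⁻¹ ≤ ∑ i ∈ s, (δ ^ 2)⁻¹ * (1 / (k i : ℝ) ^ 2) := sum_le_sum hterm
    _ = (δ ^ 2)⁻¹ * ∑ n ∈ s.image k, 1 / (n : ℝ) ^ 2 := by rw [sum_image hk_inj, mul_sum]
    _ ≤ (δ ^ 2)⁻¹ * (π ^ 2 / 6) := by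
      gcongr
      exact sum_le_hasSum _ (fun n _ => by positivity) hasSum_zeta_two
    _ = π ^ 2 / 6 / δ ^ 2 := by ring

theorem sum_filter_lt_inv_sub_sq_le {ι : Type*} [Fintype ι] (lam : ι → ℝ) {δ : ℝ} (hδ : 0 < δ)
    (hsep : ∀ i j, i ≠ j → δ ≤ |lam i - lam j|) (s : ι) :
    ∑ r with lam s < lam r, ((lam r - lam s) ^ 2)⁻¹ ≤ π ^ 2 / 6 / δ ^ 2 := by
  refine sum_inv_sq_le_of_separated _ _ hδ (fun r hr => ?_) (fun i _ j _ hij => ?_)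
  · have hsr : lam s < lam r := (mem_filter.mp hr).2
    simpa [abs_of_pos (sub_pos.mpr hsr)] using hsep r s (fun h => hsr.ne (congrArg lam h).symm)
  · simpa using hsep i j hij

theorem sum_inv_sub_sq_le {ι : Type*} [Fintype ι] (lam : ι → ℝ) {δ : ℝ} (hδ : 0 < δ)
    (hsep : ∀ i j, i ≠ j → δ ≤ |lam i - lam j|) (s : ι) :
    ∑ r, ((lam r - lam s) ^ 2)⁻¹ ≤ π ^ 2 / 3 / δ ^ 2 := by
  have hsep_neg : ∀ i j, i ≠ j → δ ≤ |-lam i - -lam j| := fun i j hij => by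
    rw [neg_sub_neg, abs_sub_comm]
    exact hsep i j hij
  calc ∑ r, ((lam r - lam s) ^ 2)⁻¹
      ≤ ∑ r, ((if lam s < lam r then ((lam r - lam s) ^ 2)⁻¹ else 0) +
          if -lam s < -lam r then ((-lam r - -lam s) ^ 2)⁻¹ else 0) := by
        refine sum_le_sum fun r _ => ?_
        rcases lt_trichotomy (lam r) (lam s) with h | h | h
        · rw [if_neg h.not_gt, if_pos (neg_lt_neg h), zero_add]
          exact le_of_eq (by ring)
        · simp [h]
        · simp [h, h.not_gt]
    _ ≤ π ^ 2 / 6 / δ ^ 2 + π ^ 2 / 6 / δ ^ 2 := by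
        rw [sum_add_distrib, ← sum_filter, ← sum_filter]
        exact add_le_add (sum_filter_lt_inv_sub_sq_le lam hδ hsep s)
          (sum_filter_lt_inv_sub_sq_le (-lam ·) hδ hsep_neg s)
    _ = π ^ 2 / 3 / δ ^ 2 := by ring

section Operator

variable {𝕜 ι : Type*} [RCLike 𝕜] [Fintype ι]

theorem Matrix.norm_star_dotProduct_mulVec_le_of_sum_norm_le (M : Matrix ι ι 𝕜) {D : ℝ}
    (hrow : ∀ i, ∑ j, ‖M i j‖ ≤ D) (hcol : ∀ j, ∑ i, ‖M i j‖ ≤ D) (x : ι → 𝕜) :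
    ‖star x ⬝ᵥ M *ᵥ x‖ ≤ D * ∑ i, ‖x i‖ ^ 2 := by
  have hterm : ∀ i j, ‖star x i * (M i j * x j)‖ ≤ ‖M i j‖ * ((‖x i‖ ^ 2 + ‖x j‖ ^ 2) / 2) := by
    intro i j
    rw [norm_mul, norm_mul, Pi.star_apply, norm_star]
    nlinarith [sq_nonneg (‖x i‖ - ‖x j‖), norm_nonneg (M i j)]
  calc ‖star x ⬝ᵥ M *ᵥ x‖ ≤ ∑ i, ∑ j, ‖M i j‖ * ((‖x i‖ ^ 2 + ‖x j‖ ^ 2) / 2) := by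
        simp only [dotProduct, mulVec, mul_sum]
        exact (norm_sum_le _ _).trans
          (sum_le_sum fun i _ => (norm_sum_le _ _).trans (sum_le_sum fun j _ => hterm i j))
    _ = (∑ i, ∑ j, ‖x i‖ ^ 2 * ‖M i j‖ + ∑ i, ∑ j, ‖x j‖ ^ 2 * ‖M i j‖) / 2 := by
        simp only [← sum_add_distrib, sum_div]
        exact sum_congr rfl fun i _ => sum_congr rfl fun j _ => by ring
    _ = (∑ i, ‖x i‖ ^ 2 * ∑ j, ‖M i j‖ + ∑ j, ‖x j‖ ^ 2 * ∑ i, ‖M i j‖) / 2 := by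
        simp only [mul_sum]
        rw [sum_comm (f := fun i j => ‖x j‖ ^ 2 * ‖M i j‖)]
    _ ≤ (∑ i, ‖x i‖ ^ 2 * D + ∑ j, ‖x j‖ ^ 2 * D) / 2 := by
        gcongr with i _ j _
        · exact hrow i
        · exact hcol j
    _ = D * ∑ i, ‖x i‖ ^ 2 := by
        rw [← sum_mul]; ring

variable [DecidableEq ι]

theorem Matrix.norm_dotProduct_mulVec_le (x : ι → 𝕜) (M : Matrix ι ι 𝕜) (y : ι → 𝕜) :
    ‖x ⬝ᵥ M *ᵥ y‖ ≤
      ‖toEuclideanCLM (𝕜 := 𝕜) M‖ * √(∑ i, ‖x i‖ ^ 2) * √(∑ i, ‖y i‖ ^ 2) := by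
  calc ‖x ⬝ᵥ M *ᵥ y‖ ≤ ∑ i, ‖x i‖ * ‖(M *ᵥ y) i‖ :=
        (norm_sum_le _ _).trans (sum_le_sum fun i _ => norm_mul_le _ _)
    _ ≤ √(∑ i, ‖x i‖ ^ 2) * √(∑ i, ‖(M *ᵥ y) i‖ ^ 2) := sum_mul_le_sqrt_mul_sqrt _ _ _
    _ = √(∑ i, ‖x i‖ ^ 2) * ‖toEuclideanCLM (𝕜 := 𝕜) M (WithLp.toLp 2 y)‖ := by
        rw [EuclideanSpace.norm_eq, toEuclideanCLM_toLp]
    _ ≤ √(∑ i, ‖x i‖ ^ 2) * (‖toEuclideanCLM (𝕜 := 𝕜) M‖ * ‖WithLp.toLp 2 y‖) := by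
        gcongr
        exact ContinuousLinearMap.le_opNorm _ _
    _ = ‖toEuclideanCLM (𝕜 := 𝕜) M‖ * √(∑ i, ‖x i‖ ^ 2) * √(∑ i, ‖y i‖ ^ 2) := by
        rw [EuclideanSpace.norm_eq]
        ring

theorem Matrix.IsHermitian.norm_toEuclideanCLM_le {H : Matrix ι ι 𝕜} (hH : H.IsHermitian)
    {C : ℝ} (hC : 0 ≤ C) (heig : ∀ (μ : ℝ) (c : ι → 𝕜), c ≠ 0 → H *ᵥ c = (μ : 𝕜) • c → |μ| ≤ C) :
    ‖toEuclideanCLM (𝕜 := 𝕜) H‖ ≤ C := by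
  set T := toEuclideanCLM (𝕜 := 𝕜) H
  have hT : IsSelfAdjoint T := (isHermitian_iff_isSelfAdjoint.mp hH).map _
  rw [← ENNReal.ofReal_le_ofReal_iff hC, ← coe_nnnorm, ENNReal.ofReal_coe_nnreal,
    ← T.spectralRadius_eq_nnnorm hT]
  refine iSup₂_le fun z hz => ?_
  rw [ContinuousLinearMap.spectrum_eq, ← Module.End.hasEigenvalue_iff_mem_spectrum] at hz
  obtain ⟨v, hv, hv0⟩ := hz.exists_hasEigenvector
  have hz_re : (RCLike.re z : 𝕜) = z :=
    RCLike.conj_eq_iff_re.mp (hT.isSymmetric.conj_eigenvalue_eq_self hz)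
  have hHv : H *ᵥ WithLp.ofLp v = (RCLike.re z : 𝕜) • WithLp.ofLp v := by
    rw [hz_re, ← ofLp_toEuclideanCLM, ← WithLp.ofLp_smul]
    exact congrArg WithLp.ofLp (Module.End.mem_eigenspace_iff.mp hv)
  rw [← hz_re, ← ENNReal.ofReal_coe_nnreal, coe_nnnorm, RCLike.norm_ofReal]
  exact ENNReal.ofReal_le_ofReal (heig _ _ (by simpa using hv0) hHv)

end Operator

section HilbertMatrix

variable {ι K : Type*} [Field K]

def hilbertMatrix (lam : ι → K) : Matrix ι ι K := of fun m n => (lam m - lam n)⁻¹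

@[simp]
theorem hilbertMatrix_apply (lam : ι → K) (m n : ι) :
    hilbertMatrix lam m n = (lam m - lam n)⁻¹ :=
  rfl

theorem hilbertMatrix_apply_swap (lam : ι → K) (m n : ι) :
    hilbertMatrix lam n m = -hilbertMatrix lam m n := by
  rw [hilbertMatrix_apply, hilbertMatrix_apply, ← inv_neg, neg_sub]

theorem transpose_hilbertMatrix (lam : ι → K) : (hilbertMatrix lam)ᵀ = -hilbertMatrix lam := by
  ext m n
  exact hilbertMatrix_apply_swap lam m n

theorem conjTranspose_hilbertMatrix_ofReal (lam : ι → ℝ) :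
    (hilbertMatrix (fun i => (lam i : ℂ)))ᴴ = -hilbertMatrix (fun i => (lam i : ℂ)) := by
  rw [← transpose_hilbertMatrix]
  ext m n
  simp [← Complex.ofReal_sub, ← Complex.ofReal_inv]

theorem norm_hilbertMatrix_ofReal_apply_sq (lam : ι → ℝ) (r s : ι) :
    ‖hilbertMatrix (fun i => (lam i : ℂ)) r s‖ ^ 2 = ((lam r - lam s) ^ 2)⁻¹ := by
  rw [hilbertMatrix_apply, ← Complex.ofReal_sub, norm_inv, Complex.norm_real, norm_eq_abs,
    inv_pow, sq_abs]

variable [DecidableEq ι]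

/-- Partial fractions; the two correction terms come from `r = s` and `r = t`, where the left
side vanishes. -/
theorem hilbertMatrix_mul_hilbertMatrix_eq {lam : ι → K} (hlam : Function.Injective lam)
    {s t : ι} (hst : s ≠ t) (r : ι) :
    hilbertMatrix lam r s * hilbertMatrix lam r t =
      hilbertMatrix lam s t * (hilbertMatrix lam r s - hilbertMatrix lam r t) +
        ((if r = s then hilbertMatrix lam s t ^ 2 else 0) +
          if r = t then hilbertMatrix lam s t ^ 2 else 0) := by
  by_cases hrs : r = s
  · subst hrs
    simp [hst, sq]
  by_cases hrt : r = t
  · subst hrt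
    rw [if_neg hrs, if_pos rfl, hilbertMatrix_apply_swap lam s r]
    simp [sq]
  have hsub : ∀ {i j}, i ≠ j → lam i - lam j ≠ 0 := fun hij => sub_ne_zero.mpr (hlam.ne hij)
  rw [if_neg hrs, if_neg hrt]
  simp only [hilbertMatrix_apply]
  field_simp [hsub hrs, hsub hrt, hsub hst]
  ring

variable [Fintype ι]

theorem transpose_hilbertMatrix_mul_self {lam : ι → K} (hlam : Function.Injective lam) :
    (hilbertMatrix lam)ᵀ * hilbertMatrix lam =
      diagonal (fun s => ∑ r, hilbertMatrix lam r s ^ 2) +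
        diagonal (fun s => ∑ r, hilbertMatrix lam r s) * hilbertMatrix lam -
        hilbertMatrix lam * diagonal (fun s => ∑ r, hilbertMatrix lam r s) +
        (2 : K) • (hilbertMatrix lam ⊙ hilbertMatrix lam) := by
  ext s t
  rw [Matrix.add_apply, Matrix.sub_apply, Matrix.add_apply, diagonal_mul, mul_diagonal,
    Matrix.smul_apply, hadamard_apply, mul_apply]
  simp only [transpose_apply, diagonal_apply, smul_eq_mul]
  by_cases hst : s = t
  · subst hst
    simp [sq]
  rw [sum_congr rfl fun r _ => hilbertMatrix_mul_hilbertMatrix_eq hlam hst r, sum_add_distrib,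
    sum_add_distrib, sum_ite_eq', sum_ite_eq', ← mul_sum, sum_sub_distrib, if_neg hst]
  simp only [mem_univ, if_true]
  ring

end HilbertMatrix

section MontgomeryVaughan

variable {ι : Type*} [Fintype ι] [DecidableEq ι]

theorem sq_mul_star_dotProduct_self_eq {lam : ι → ℝ} (hlam : Function.Injective lam) {μ : ℝ}
    {c : ι → ℂ} (heig : hilbertMatrix (fun i => (lam i : ℂ)) *ᵥ c = (Complex.I * μ) • c) :
    (μ ^ 2 : ℂ) * (star c ⬝ᵥ c) =
      star c ⬝ᵥ (diagonal fun s => ∑ r, hilbertMatrix (fun i => (lam i : ℂ)) r s ^ 2) *ᵥ c +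
        2 * (star c ⬝ᵥ (hilbertMatrix (fun i => (lam i : ℂ)) ⊙
          hilbertMatrix (fun i => (lam i : ℂ))) *ᵥ c) := by
  have hgram := transpose_hilbertMatrix_mul_self (lam := fun i => (lam i : ℂ))
    (Complex.ofReal_injective.comp hlam)
  set A := hilbertMatrix (fun i => (lam i : ℂ))
  set S := fun s => ∑ r, A r s
  have hAH : Aᴴ = -A := conjTranspose_hilbertMatrix_ofReal lam
  have hcA : star c ᵥ* A = (Complex.I * μ) • star c := by
    rw [← neg_neg A, ← hAH, vecMul_neg, ← star_mulVec, heig, star_smul]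
    simp [Complex.conj_ofReal, neg_smul]
  have hnorm : star c ⬝ᵥ (Aᵀ * A) *ᵥ c = (μ ^ 2 : ℂ) * (star c ⬝ᵥ c) := by
    rw [transpose_hilbertMatrix, ← hAH, ← mulVec_mulVec, dotProduct_mulVec, ← star_mulVec, heig,
      star_smul, smul_dotProduct, dotProduct_smul, smul_smul, smul_eq_mul]
    congr 1
    simp only [star_mul', Complex.star_def, Complex.conj_I, Complex.conj_ofReal]
    linear_combination (-(μ : ℂ) ^ 2) * Complex.I_sq
  -- `c` is an eigenvector of `A` on both sides, so the commutator term vanishes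
  have hcomm : star c ⬝ᵥ (diagonal S * A) *ᵥ c = star c ⬝ᵥ (A * diagonal S) *ᵥ c := by
    rw [← mulVec_mulVec, heig, ← mulVec_mulVec, dotProduct_mulVec (star c) A, hcA, mulVec_smul,
      dotProduct_smul, smul_dotProduct]
  rw [← hnorm, hgram]
  simp only [add_mulVec, sub_mulVec, dotProduct_add, dotProduct_sub, hcomm, smul_mulVec,
    dotProduct_smul, smul_eq_mul]
  ring

theorem sq_le_of_hilbertMatrix_mulVec_eq_smul {lam : ι → ℝ} (hlam : Function.Injective lam)
    {D : ℝ} (hD : ∀ s, ∑ r, ((lam r - lam s) ^ 2)⁻¹ ≤ D) {μ : ℝ} {c : ι → ℂ} (hc : c ≠ 0)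
    (heig : hilbertMatrix (fun i => (lam i : ℂ)) *ᵥ c = (Complex.I * μ) • c) :
    μ ^ 2 ≤ 3 * D := by
  have hquad := sq_mul_star_dotProduct_self_eq hlam heig
  set A := hilbertMatrix (fun i => (lam i : ℂ))
  have hcol : ∀ s, ∑ r, ‖A r s‖ ^ 2 ≤ D := fun s => by
    simpa only [A, norm_hilbertMatrix_ofReal_apply_sq] using hD s
  have hdiag : ‖star c ⬝ᵥ (diagonal fun s => ∑ r, A r s ^ 2) *ᵥ c‖ ≤ D * ∑ i, ‖c i‖ ^ 2 := by
    have hd : ∀ s, ‖∑ r, A r s ^ 2‖ ≤ D := fun s =>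
      (norm_sum_le _ _).trans (by simpa only [norm_pow] using hcol s)
    refine norm_star_dotProduct_mulVec_le_of_sum_norm_le _ (fun i => ?_) (fun j => ?_) c
    · simpa [diagonal_apply, apply_ite] using hd i
    · simpa [diagonal_apply, apply_ite] using hd j
  have hhad : ‖star c ⬝ᵥ (A ⊙ A) *ᵥ c‖ ≤ D * ∑ i, ‖c i‖ ^ 2 := by
    refine norm_star_dotProduct_mulVec_le_of_sum_norm_le _ (fun i => ?_) (fun j => ?_) c
    · have hswap : ∀ j, ‖A i j‖ = ‖A j i‖ := fun j => by
        rw [show A i j = -A j i from hilbertMatrix_apply_swap _ j i, norm_neg]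
      simpa [hadamard_apply, ← sq, hswap] using hcol i
    · simpa [hadamard_apply, ← sq] using hcol j
  have hcc : star c ⬝ᵥ c = ((∑ i, ‖c i‖ ^ 2 : ℝ) : ℂ) := by
    simp [dotProduct, Complex.conj_mul']
  have hpos : 0 < ∑ i, ‖c i‖ ^ 2 := by
    obtain ⟨i, hi⟩ := Function.ne_iff.mp hc
    exact sum_pos' (fun j _ => by positivity) ⟨i, mem_univ i, pow_pos (norm_pos_iff.mpr hi) 2⟩
  refine le_of_mul_le_mul_right ?_ hpos
  calc μ ^ 2 * ∑ i, ‖c i‖ ^ 2 = ‖(μ ^ 2 : ℂ) * (star c ⬝ᵥ c)‖ := by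
        rw [hcc, norm_mul, ← Complex.ofReal_pow, Complex.norm_real, Complex.norm_real,
          norm_of_nonneg (sq_nonneg μ), norm_of_nonneg hpos.le]
    _ ≤ ‖star c ⬝ᵥ (diagonal fun s => ∑ r, A r s ^ 2) *ᵥ c‖ +
          2 * ‖star c ⬝ᵥ (A ⊙ A) *ᵥ c‖ := by
        rw [hquad]
        exact (norm_add_le _ _).trans_eq (by rw [norm_mul, Complex.norm_two])
    _ ≤ 3 * D * ∑ i, ‖c i‖ ^ 2 := by linarith

theorem norm_toEuclideanCLM_hilbertMatrix_le {lam : ι → ℝ} (hlam : Function.Injective lam)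
    {D : ℝ} (hD : ∀ s, ∑ r, ((lam r - lam s) ^ 2)⁻¹ ≤ D) :
    ‖toEuclideanCLM (𝕜 := ℂ) (hilbertMatrix fun i => (lam i : ℂ))‖ ≤ √(3 * D) := by
  set A := hilbertMatrix (fun i => (lam i : ℂ))
  have hAH : Aᴴ = -A := conjTranspose_hilbertMatrix_ofReal lam
  have hH : (-Complex.I • A).IsHermitian := by
    rw [IsHermitian, conjTranspose_smul, hAH]
    simp
  have hA : A = Complex.I • (-Complex.I • A) := by
    rw [smul_smul]
    simp
  rw [hA, map_smul, norm_smul, Complex.norm_I, one_mul]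
  refine hH.norm_toEuclideanCLM_le (sqrt_nonneg _) fun μ c hc hμ => ?_
  have heig : A *ᵥ c = (Complex.I * μ) • c := by
    rw [hA, smul_mulVec, hμ]
    exact smul_smul _ _ _
  exact abs_le_sqrt (sq_le_of_hilbertMatrix_mulVec_eq_smul hlam hD hc heig)

end MontgomeryVaughan

theorem stmt3 (N : ℕ) (lam : Fin N → ℝ) (δ : ℝ) (hδ : 0 < δ)
    (hsep : ∀ m n : Fin N, m ≠ n → δ ≤ |lam m - lam n|)
    (x y : Fin N → ℂ) :
    ‖∑ m : Fin N, ∑ n ∈ Finset.univ.erase m, x m * y n / ((lam m : ℂ) - lam n)‖ ≤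
      (Real.pi / δ) * Real.sqrt (∑ m, ‖x m‖ ^ 2) * Real.sqrt (∑ n, ‖y n‖ ^ 2) := by
  have hlam : Function.Injective lam := fun m n h => by
    by_contra hmn
    have := hsep m n hmn
    rw [h, sub_self, abs_zero] at this
    linarith
  have hsum : ∑ m : Fin N, ∑ n ∈ univ.erase m, x m * y n / ((lam m : ℂ) - lam n) =
      x ⬝ᵥ hilbertMatrix (fun i => (lam i : ℂ)) *ᵥ y := by
    refine sum_congr rfl fun m _ => ?_
    rw [mulVec, dotProduct, mul_sum, ← sum_erase univ (a := m)
      (by simp : x m * (hilbertMatrix (fun i => (lam i : ℂ)) m m * y m) = 0)]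
    exact sum_congr rfl fun n _ => by rw [hilbertMatrix_apply, div_eq_mul_inv]; ring
  have hnorm : √(3 * (π ^ 2 / 3 / δ ^ 2)) = π / δ := by
    rw [show 3 * (π ^ 2 / 3 / δ ^ 2) = (π / δ) ^ 2 by ring, sqrt_sq (by positivity)]
  rw [hsum]
  refine (norm_dotProduct_mulVec_le x _ y).trans ?_
  gcongr
  exact hnorm ▸ norm_toEuclideanCLM_hilbertMatrix_le hlam (sum_inv_sub_sq_le lam hδ hsep)
end
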